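/- Let p > 1, let φ, ψ : ℝ^d → [0,∞) be measurable, and let ω : ℝ^d → (0,∞) be a measurable weight such that for every x the oscillation of ω on the ball B_ε(x) is at most ω(x)/2. Then ∫_{ℝ^d} (⨍_{B_ε(x)} φψ dy)² dx ≤ C (∫_{ℝ^d} ψ^{2p} ω dx)^{1/p} · (∫_{ℝ^d} ω^{-1/(p-1)} (⨍_{B_ε(x)} φ² dy)^{p/(p-1)} dx)^{(p-1)/p}, where C depends only on p and d. -/

import Mathlib

open MeasureTheory Metric
open scoped ENNReal

/-!
Fix `x` and let `q = p / (p - 1)`. The oscillation bound makes `ω` comparable to `ω x` up to a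
factor `2` on `B_ε(x)`. Cauchy–Schwarz gives `(⨍ φψ)² ≤ ⨍ φ² · ⨍ ψ²`, comparability gives
`⨍ ψ² ≤ 2 (ω x)⁻¹ ⨍ ψ² ω`, and Hölder for the measure `ω dy` gives
`⨍ ψ² ω ≤ (⨍ ψ^{2p} ω)^{1/p} (⨍ ω)^{1/q} ≤ 2 (⨍ ψ^{2p} ω)^{1/p} (ω x)^{1/q}`.
So the integrand is at most `4 F(x) G(x)` with `F = (⨍ ψ^{2p} ω)^{1/p}` and
`G = (ω x)^{-1/p} ⨍ φ²`. Hölder in `x` with exponents `p, q`, together with Fubini in the form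
`∫ ⨍_{B_ε(x)} g dy dx = ∫ g`, gives the claim with `C = 4`.
-/

theorem ENNReal.le_two_mul_of_le_add_half {a b : ℝ≥0∞} (ha : a ≠ ∞) (h : a ≤ b + a / 2) :
    a ≤ 2 * b := by
  have hhalf : a / 2 ≤ b := by
    refine (ENNReal.add_le_add_iff_right (ENNReal.div_ne_top ha two_ne_zero)).1 ?_
    rwa [ENNReal.add_halves]
  calc a = 2 * (a / 2) := (ENNReal.mul_div_cancel two_ne_zero ENNReal.ofNat_ne_top).symm
    _ ≤ 2 * b := by gcongr

theorem le_two_mul_of_oscillation_le {α : Type*} {s : Set α} {ω : α → ℝ≥0∞} {x : α}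
    (hx : x ∈ s) (hωx : ω x ≠ ∞) (hosc : ∀ y ∈ s, ∀ z ∈ s, ω y ≤ ω z + ω x / 2) {y : α}
    (hy : y ∈ s) : ω x ≤ 2 * ω y ∧ ω y ≤ 2 * ω x :=
  ⟨ENNReal.le_two_mul_of_le_add_half hωx (hosc x hx y hy),
    (hosc y hy x hx).trans (by rw [two_mul]; gcongr; exact ENNReal.half_le_self)⟩

section Holder

variable {α : Type*} [MeasurableSpace α] {μ : Measure α}

theorem rpow_two_lintegral_mul_le {f g : α → ℝ≥0∞} (hf : AEMeasurable f μ)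
    (hg : AEMeasurable g μ) :
    (∫⁻ y, f y * g y ∂μ) ^ (2 : ℝ) ≤ (∫⁻ y, f y ^ (2 : ℝ) ∂μ) * ∫⁻ y, g y ^ (2 : ℝ) ∂μ := by
  have h := ENNReal.lintegral_mul_le_Lp_mul_Lq μ Real.HolderConjugate.two_two hf hg
  calc (∫⁻ y, f y * g y ∂μ) ^ (2 : ℝ)
      ≤ ((∫⁻ y, f y ^ (2 : ℝ) ∂μ) ^ (1 / 2 : ℝ) * (∫⁻ y, g y ^ (2 : ℝ) ∂μ) ^ (1 / 2 : ℝ))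
          ^ (2 : ℝ) := ENNReal.rpow_le_rpow h zero_le_two
    _ = (∫⁻ y, f y ^ (2 : ℝ) ∂μ) * ∫⁻ y, g y ^ (2 : ℝ) ∂μ := by
      rw [ENNReal.mul_rpow_of_nonneg _ _ zero_le_two, ← ENNReal.rpow_mul, ← ENNReal.rpow_mul]
      norm_num

/-- Hölder's inequality for the measure `μ.withDensity ω`, paired against the constant `1`. -/
theorem lintegral_mul_le_weighted_Lp_mul {p q : ℝ} (hpq : p.HolderConjugate q)
    {g ω : α → ℝ≥0∞} (hg : AEMeasurable g μ) (hω : AEMeasurable ω μ) :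
    ∫⁻ y, g y * ω y ∂μ ≤ (∫⁻ y, g y ^ p * ω y ∂μ) ^ (1 / p) * (∫⁻ y, ω y ∂μ) ^ (1 / q) := by
  have hp := hpq.pos
  have hq := hpq.symm.pos
  have h := ENNReal.lintegral_mul_le_Lp_mul_Lq μ hpq
    (hg.mul (hω.pow_const (1 / p))) (hω.pow_const (1 / q))
  have split : ∀ y, g y * ω y ^ (1 / p) * ω y ^ (1 / q) = g y * ω y := fun y => by
    rw [mul_assoc, ← ENNReal.rpow_add_of_nonneg _ _ (by positivity) (by positivity), one_div,
      one_div, hpq.inv_add_inv_eq_one, ENNReal.rpow_one]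
  have first : ∀ y, (g y * ω y ^ (1 / p)) ^ p = g y ^ p * ω y := fun y => by
    rw [ENNReal.mul_rpow_of_nonneg _ _ hp.le, ← ENNReal.rpow_mul, one_div_mul_cancel hp.ne',
      ENNReal.rpow_one]
  have second : ∀ y, (ω y ^ (1 / q)) ^ q = ω y := fun y => by
    rw [← ENNReal.rpow_mul, one_div_mul_cancel hq.ne', ENNReal.rpow_one]
  simpa only [Pi.mul_apply, split, first, second] using h

theorem rpow_two_lintegral_mul_le_of_weight_comparable [IsProbabilityMeasure μ] {p : ℝ}
    (hp : 1 < p) {φ ψ ω : α → ℝ≥0∞} (hφ : AEMeasurable φ μ) (hψ : AEMeasurable ψ μ)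
    (hω : AEMeasurable ω μ) {c : ℝ≥0∞} (hc0 : c ≠ 0) (hc : c ≠ ∞)
    (hlow : ∀ᵐ y ∂μ, c ≤ 2 * ω y) (hup : ∀ᵐ y ∂μ, ω y ≤ 2 * c) :
    (∫⁻ y, φ y * ψ y ∂μ) ^ (2 : ℝ)
      ≤ 4 * (∫⁻ y, ψ y ^ (2 * p) * ω y ∂μ) ^ (1 / p) *
        (c ^ (-(1 / p)) * ∫⁻ y, φ y ^ (2 : ℝ) ∂μ) := by
  have hpq := Real.HolderConjugate.conjExponent hp
  set q := p.conjExponent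
  set K := ∫⁻ y, ψ y ^ (2 * p) * ω y ∂μ
  have hψ2 : AEMeasurable (fun y => ψ y ^ (2 : ℝ)) μ := hψ.pow_const 2
  have unweight : ∫⁻ y, ψ y ^ (2 : ℝ) ∂μ ≤ 2 * c⁻¹ * ∫⁻ y, ψ y ^ (2 : ℝ) * ω y ∂μ := by
    rw [← lintegral_const_mul' _ _ (by finiteness)]
    refine lintegral_mono_ae (hlow.mono fun y hy => ?_)
    calc ψ y ^ (2 : ℝ) = c⁻¹ * c * ψ y ^ (2 : ℝ) := by rw [ENNReal.inv_mul_cancel hc0 hc, one_mul]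
      _ ≤ c⁻¹ * (2 * ω y) * ψ y ^ (2 : ℝ) := by gcongr
      _ = 2 * c⁻¹ * (ψ y ^ (2 : ℝ) * ω y) := by ring
  have holder : ∫⁻ y, ψ y ^ (2 : ℝ) * ω y ∂μ ≤ K ^ (1 / p) * (∫⁻ y, ω y ∂μ) ^ (1 / q) := by
    convert lintegral_mul_le_weighted_Lp_mul hpq hψ2 hω using 5 with y
    rw [← ENNReal.rpow_mul]
  have mass : (∫⁻ y, ω y ∂μ) ^ (1 / q) ≤ 2 * c ^ (1 / q) := by
    have hint : ∫⁻ y, ω y ∂μ ≤ 2 * c := by simpa using lintegral_mono_ae hup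
    have htwo : (2 : ℝ≥0∞) ^ (1 / q) ≤ 2 := by
      simpa using ENNReal.rpow_le_rpow_of_exponent_le (x := 2) one_le_two
        ((div_le_one hpq.symm.pos).2 hpq.symm.lt.le)
    have hq : 0 ≤ 1 / q := one_div_nonneg.2 hpq.symm.nonneg
    calc (∫⁻ y, ω y ∂μ) ^ (1 / q) ≤ (2 * c) ^ (1 / q) := ENNReal.rpow_le_rpow hint hq
      _ = 2 ^ (1 / q) * c ^ (1 / q) := ENNReal.mul_rpow_of_nonneg _ _ hq
      _ ≤ 2 * c ^ (1 / q) := by gcongr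
  have exponent : c⁻¹ * c ^ (1 / q) = c ^ (-(1 / p)) := by
    rw [← ENNReal.rpow_neg_one, ← ENNReal.rpow_add _ _ hc0 hc, one_div, one_div,
      ← hpq.inv_add_inv_eq_one]
    ring_nf
  calc (∫⁻ y, φ y * ψ y ∂μ) ^ (2 : ℝ)
      ≤ (∫⁻ y, φ y ^ (2 : ℝ) ∂μ) * ∫⁻ y, ψ y ^ (2 : ℝ) ∂μ := rpow_two_lintegral_mul_le hφ hψ
    _ ≤ (∫⁻ y, φ y ^ (2 : ℝ) ∂μ) * (2 * c⁻¹ * (K ^ (1 / p) * (2 * c ^ (1 / q)))) := by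
      grw [unweight, holder, mass]
    _ = 4 * K ^ (1 / p) * (c⁻¹ * c ^ (1 / q) * ∫⁻ y, φ y ^ (2 : ℝ) ∂μ) := by ring
    _ = _ := by rw [exponent]

theorem rpow_two_setLAverage_mul_le_of_weight_comparable {s : Set α} (hs : MeasurableSet s)
    (hμs0 : μ s ≠ 0) (hμs : μ s ≠ ∞) {p : ℝ} (hp : 1 < p) {φ ψ ω : α → ℝ≥0∞}
    (hφ : AEMeasurable φ (μ.restrict s)) (hψ : AEMeasurable ψ (μ.restrict s))
    (hω : AEMeasurable ω (μ.restrict s)) {c : ℝ≥0∞} (hc0 : c ≠ 0) (hc : c ≠ ∞)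
    (hlow : ∀ y ∈ s, c ≤ 2 * ω y) (hup : ∀ y ∈ s, ω y ≤ 2 * c) :
    (⨍⁻ y in s, φ y * ψ y ∂μ) ^ (2 : ℝ)
      ≤ 4 * (⨍⁻ y in s, ψ y ^ (2 * p) * ω y ∂μ) ^ (1 / p) *
        (c ^ (-(1 / p)) * ⨍⁻ y in s, φ y ^ (2 : ℝ) ∂μ) := by
  have : IsFiniteMeasure (μ.restrict s) := isFiniteMeasure_restrict.2 hμs
  have : NeZero (μ.restrict s) := ⟨Measure.restrict_eq_zero.not.2 hμs0⟩
  exact rpow_two_lintegral_mul_le_of_weight_comparable hp (hφ.smul_measure _) (hψ.smul_measure _)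
    (hω.smul_measure _) hc0 hc (Measure.ae_smul_measure (ae_restrict_of_forall_mem hs hlow) _)
    (Measure.ae_smul_measure (ae_restrict_of_forall_mem hs hup) _)

end Holder

section Ball

variable {α : Type*} [PseudoMetricSpace α] [SecondCountableTopology α] [MeasurableSpace α]
  [OpensMeasurableSpace α] {μ : Measure α} [SFinite μ] {ε : ℝ} {g : α → ℝ≥0∞}

theorem measurable_uncurry_indicator_ball (hg : Measurable g) :
    Measurable (Function.uncurry fun x y => (ball x ε).indicator g y) := by
  have hball : MeasurableSet {z : α × α | dist z.2 z.1 < ε} :=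
    measurableSet_lt (measurable_snd.dist measurable_fst) measurable_const
  exact (hg.comp measurable_snd).indicator hball

theorem measurable_setLIntegral_ball (hg : Measurable g) :
    Measurable fun x => ∫⁻ y in ball x ε, g y ∂μ := by
  simpa only [Function.uncurry, lintegral_indicator measurableSet_ball] using
    (measurable_uncurry_indicator_ball (ε := ε) hg).lintegral_prod_right' (ν := μ)

theorem measurable_setLAverage_ball (hg : Measurable g) :
    Measurable fun x => ⨍⁻ y in ball x ε, g y ∂μ := by
  simp_rw [setLAverage_eq]
  exact (measurable_setLIntegral_ball hg).div
    (by simpa using measurable_setLIntegral_ball (μ := μ) (ε := ε) measurable_const (g := 1))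

theorem lintegral_setLIntegral_ball (hg : Measurable g) :
    ∫⁻ x, ∫⁻ y in ball x ε, g y ∂μ ∂μ = ∫⁻ y, μ (ball y ε) * g y ∂μ := by
  simp_rw [← lintegral_indicator measurableSet_ball]
  rw [lintegral_lintegral_swap (measurable_uncurry_indicator_ball hg).aemeasurable]
  refine lintegral_congr fun y => ?_
  have hsymm : (fun x => (ball x ε).indicator g y) = (ball y ε).indicator fun _ => g y := by
    funext x
    simp only [Set.indicator, mem_ball, dist_comm]
  rw [hsymm, lintegral_indicator_const measurableSet_ball, mul_comm]

end Ball

theorem lintegral_setLAverage_ball {E : Type*} [NormedAddCommGroup E] [ProperSpace E]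
    [MeasurableSpace E] [BorelSpace E] (μ : Measure E) [μ.IsAddHaarMeasure] {ε : ℝ} (hε : 0 < ε)
    {g : E → ℝ≥0∞} (hg : Measurable g) :
    ∫⁻ x, ⨍⁻ y in ball x ε, g y ∂μ ∂μ = ∫⁻ y, g y ∂μ := by
  have hball : ∀ x, μ (ball x ε) = μ (ball 0 ε) := fun x => μ.addHaar_ball_center x ε
  simp_rw [setLAverage_eq, hball, ENNReal.div_eq_inv_mul]
  rw [lintegral_const_mul' _ _ (ENNReal.inv_ne_top.2 (measure_ball_pos μ 0 hε).ne'),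
    lintegral_setLIntegral_ball hg]
  simp_rw [hball]
  rw [lintegral_const_mul _ hg,
    ← mul_assoc, ENNReal.inv_mul_cancel (measure_ball_pos μ 0 hε).ne' measure_ball_lt_top.ne,
    one_mul]

theorem stmt0_general (d : ℕ) (p : ℝ) (hp : 1 < p) :
    ∃ C : ℝ, 0 < C ∧
    ∀ (ε : ℝ) (φ ψ ω : EuclideanSpace ℝ (Fin d) → ℝ≥0∞),
      0 < ε →
      Measurable φ → Measurable ψ → Measurable ω →
      (∀ x, 0 < ω x ∧ ω x < ⊤) →
      (∀ x : EuclideanSpace ℝ (Fin d), ∀ y ∈ ball x ε, ∀ z ∈ ball x ε,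
        ω y ≤ ω z + ω x / 2) →
      (∫⁻ x, ((∫⁻ y in ball x ε, φ y * ψ y) / volume (ball x ε)) ^ (2 : ℝ))
        ≤ ENNReal.ofReal C *
          (∫⁻ x, (ψ x) ^ (2 * p) * ω x) ^ (1 / p) *
          (∫⁻ x, (ω x) ^ (-(1 / (p - 1))) *
            ((∫⁻ y in ball x ε, (φ y) ^ (2 : ℝ)) / volume (ball x ε))
              ^ (p / (p - 1))) ^ ((p - 1) / p) := by
  refine ⟨4, by norm_num, fun ε φ ψ ω hε hφ hψ hω hωpos hosc => ?_⟩
  simp_rw [← setLAverage_eq]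
  have hpq : p.HolderConjugate (p / (p - 1)) := .conjExponent hp
  set F := fun x => (⨍⁻ y in ball x ε, ψ y ^ (2 * p) * ω y ∂volume) ^ (1 / p)
  set G := fun x => ω x ^ (-(1 / p)) * ⨍⁻ y in ball x ε, φ y ^ (2 : ℝ) ∂volume
  have pointwise x : (⨍⁻ y in ball x ε, φ y * ψ y ∂volume) ^ (2 : ℝ) ≤ 4 * (F x * G x) := by
    obtain ⟨hx0, hxtop⟩ := hωpos x
    simpa only [mul_assoc] using rpow_two_setLAverage_mul_le_of_weight_comparable
      measurableSet_ball (measure_ball_pos _ _ hε).ne' measure_ball_lt_top.ne hp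
      hφ.aemeasurable hψ.aemeasurable hω.aemeasurable hx0.ne' hxtop.ne
      (fun y hy => (le_two_mul_of_oscillation_le (mem_ball_self hε) hxtop.ne (hosc x) hy).1)
      (fun y hy => (le_two_mul_of_oscillation_le (mem_ball_self hε) hxtop.ne (hosc x) hy).2)
  have hF : ∫⁻ x, F x ^ p = ∫⁻ x, ψ x ^ (2 * p) * ω x := by
    simp_rw [F, ← ENNReal.rpow_mul, one_div_mul_cancel hpq.ne_zero, ENNReal.rpow_one]
    exact lintegral_setLAverage_ball volume hε (by fun_prop)
  have hG x : G x ^ (p / (p - 1)) = ω x ^ (-(1 / (p - 1))) *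
      (⨍⁻ y in ball x ε, φ y ^ (2 : ℝ) ∂volume) ^ (p / (p - 1)) := by
    rw [ENNReal.mul_rpow_of_nonneg _ _ hpq.symm.nonneg, ← ENNReal.rpow_mul]
    congr 2
    field_simp
  have hFm : Measurable F := (measurable_setLAverage_ball (by fun_prop)).pow_const _
  have hGm : Measurable G := (hω.pow_const _).mul (measurable_setLAverage_ball (by fun_prop))
  calc ∫⁻ x, (⨍⁻ y in ball x ε, φ y * ψ y ∂volume) ^ (2 : ℝ)
      ≤ ∫⁻ x, 4 * (F x * G x) := lintegral_mono pointwise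
    _ = 4 * ∫⁻ x, F x * G x := lintegral_const_mul' _ _ (by simp)
    _ ≤ 4 * ((∫⁻ x, F x ^ p) ^ (1 / p) * (∫⁻ x, G x ^ (p / (p - 1))) ^ (1 / (p / (p - 1)))) := by
      gcongr
      exact ENNReal.lintegral_mul_le_Lp_mul_Lq _ hpq hFm.aemeasurable hGm.aemeasurable
    _ = _ := by
      simp_rw [hF, hG, one_div_div, ENNReal.ofReal_ofNat, mul_assoc]

/-- Hölder-type estimate for averaged products: for `p > 1` and a weight `ω`
with small oscillation on `ε`-balls,
`∫ (⨍_{B_ε(x)} φψ)² dx ≤ C (∫ ψ^{2p} ω)^{1/p} (∫ ω^{-1/(p-1)} (⨍_{B_ε(x)} φ²)^{p/(p-1)})^{(p-1)/p}`,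
with `C = C(d, p)`. -/
theorem stmt0 (d : ℕ) (p : ℝ) (hd : 1 ≤ d) (hp : 1 < p) :
    ∃ C : ℝ, 0 < C ∧
    ∀ (ε : ℝ) (φ ψ ω : EuclideanSpace ℝ (Fin d) → ℝ≥0∞),
      0 < ε →
      Measurable φ → Measurable ψ → Measurable ω →
      (∀ x, 0 < ω x ∧ ω x < ⊤) →
      (∀ x : EuclideanSpace ℝ (Fin d), ∀ y ∈ ball x ε, ∀ z ∈ ball x ε,
        ω y ≤ ω z + ω x / 2) →
      (∫⁻ x, ((∫⁻ y in ball x ε, φ y * ψ y) / volume (ball x ε)) ^ (2 : ℝ))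
        ≤ ENNReal.ofReal C *
          (∫⁻ x, (ψ x) ^ (2 * p) * ω x) ^ (1 / p) *
          (∫⁻ x, (ω x) ^ (-(1 / (p - 1))) *
            ((∫⁻ y in ball x ε, (φ y) ^ (2 : ℝ)) / volume (ball x ε))
              ^ (p / (p - 1))) ^ ((p - 1) / p) :=
  stmt0_general d p hp
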